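/- arXiv:1905.11243 — 2 statements merged into one kernel-verified Lean document; each statement's English description precedes it below -/
import Mathlib

section
/- Let L be a solvable Leibniz A-algebra of derived length at most n+1, and suppose L = B ∔ C (vector space direct sum) where B = L^(n) and C is a subalgebra of L. If D is an ideal of L, then D = (B ∩ D) ∔ (C ∩ D). -/
/-- A (right) Leibniz algebra structure on an `F`-vector space `L`:
a bilinear bracket satisfying `[x,[y,z]] = [[x,y],z] - [[x,z],y]`. -/
structure LeibnizAlg (F : Type*) (L : Type*) [Field F] [AddCommGroup L] [Module F L] where
  bracket : L →ₗ[F] L →ₗ[F] L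
  leibniz : ∀ x y z : L,
    bracket x (bracket y z) = bracket (bracket x y) z - bracket (bracket x z) y

namespace LeibnizAlg

variable {F : Type*} {L : Type*} [Field F] [AddCommGroup L] [Module F L]

/-- The product `[M, N]` of two subspaces: the span of all brackets `[m, n]`. -/
def prod (A : LeibnizAlg F L) (M N : Submodule F L) : Submodule F L :=
  Submodule.span F {z : L | ∃ m ∈ M, ∃ n ∈ N, z = A.bracket m n}

/-- A subalgebra: a subspace closed under the product. -/
def IsSubalgebra (A : LeibnizAlg F L) (S : Submodule F L) : Prop :=
  A.prod S S ≤ S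

/-- A (two-sided) ideal: `[I, L] ⊆ I` and `[L, I] ⊆ I`. -/
def IsIdeal (A : LeibnizAlg F L) (I : Submodule F L) : Prop :=
  A.prod I ⊤ ≤ I ∧ A.prod ⊤ I ≤ I

/-- Lower central series of a subspace `U`: `lcs U 0 = U = U¹`,
`lcs U k = U^(k+1)`, i.e. `lcs U (k+1) = [lcs U k, U]`. -/
def lcs (A : LeibnizAlg F L) (U : Submodule F L) : ℕ → Submodule F L
  | 0 => U
  | k + 1 => A.prod (lcs A U k) U

/-- `U` is nilpotent: `U^(n+1) = 0` for some `n`. -/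
def IsNilpotentSub (A : LeibnizAlg F L) (U : Submodule F L) : Prop :=
  ∃ n : ℕ, A.lcs U n = ⊥

/-- `U` is abelian: `[U, U] = 0`. -/
def IsAbelian (A : LeibnizAlg F L) (U : Submodule F L) : Prop :=
  A.prod U U = ⊥

/-- An `A`-algebra: every nilpotent subalgebra is abelian. -/
def IsAAlgebra (A : LeibnizAlg F L) : Prop :=
  ∀ U : Submodule F L, A.IsSubalgebra U → A.IsNilpotentSub U → A.IsAbelian U

/-- Derived series: `derSeries 0 = L`, `derSeries (k+1) = [derSeries k, derSeries k]`. -/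
def derSeries (A : LeibnizAlg F L) : ℕ → Submodule F L
  | 0 => ⊤
  | k + 1 => A.prod (derSeries A k) (derSeries A k)

/-- `L` is solvable: some term of the derived series vanishes. -/
def IsSolvable (A : LeibnizAlg F L) : Prop :=
  ∃ n : ℕ, A.derSeries n = ⊥

/-- The centralizer `Z_L(U)` of a subspace `U`. -/
def centralizer (A : LeibnizAlg F L) (U : Submodule F L) : Submodule F L where
  carrier := {x : L | ∀ u ∈ U, A.bracket x u = 0 ∧ A.bracket u x = 0}
  add_mem' := by
    intro a b ha hb u hu
    refine ⟨?_, ?_⟩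
    · rw [map_add, LinearMap.add_apply, (ha u hu).1, (hb u hu).1, add_zero]
    · rw [map_add, (ha u hu).2, (hb u hu).2, add_zero]
  zero_mem' := by
    intro u hu
    refine ⟨?_, ?_⟩
    · rw [map_zero, LinearMap.zero_apply]
    · rw [map_zero]
  smul_mem' := by
    intro c a ha u hu
    refine ⟨?_, ?_⟩
    · rw [map_smul, LinearMap.smul_apply, (ha u hu).1, smul_zero]
    · rw [map_smul, (ha u hu).2, smul_zero]

/-- The centre of the subalgebra `M`: elements of `M` centralizing `M`. -/
def centerOf (A : LeibnizAlg F L) (M : Submodule F L) : Submodule F L :=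
  M ⊓ A.centralizer M

/-- `N` is the nilradical: the largest nilpotent ideal. -/
def IsNilradical (A : LeibnizAlg F L) (N : Submodule F L) : Prop :=
  A.IsIdeal N ∧ A.IsNilpotentSub N ∧
    ∀ I : Submodule F L, A.IsIdeal I → A.IsNilpotentSub I → I ≤ N

/-- A minimal ideal: a nonzero ideal containing no ideal other than `0` and itself. -/
def IsMinimalIdeal (A : LeibnizAlg F L) (I : Submodule F L) : Prop :=
  A.IsIdeal I ∧ I ≠ ⊥ ∧ ∀ J : Submodule F L, A.IsIdeal J → J ≤ I → J = ⊥ ∨ J = I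

/-- A maximal subalgebra. -/
def IsMaximalSubalgebra (A : LeibnizAlg F L) (M : Submodule F L) : Prop :=
  A.IsSubalgebra M ∧ M ≠ ⊤ ∧
    ∀ S : Submodule F L, A.IsSubalgebra S → M ≤ S → S = M ∨ S = ⊤

/-- `L` is φ-free: every ideal contained in all maximal subalgebras is zero. -/
def IsPhiFree (A : LeibnizAlg F L) : Prop :=
  ∀ I : Submodule F L, A.IsIdeal I →
    (∀ M : Submodule F L, A.IsMaximalSubalgebra M → I ≤ M) → I = ⊥

/-- `Asoc L`: the sum of the abelian minimal ideals. -/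
def asoc (A : LeibnizAlg F L) : Submodule F L :=
  sSup {I : Submodule F L | A.IsMinimalIdeal I ∧ A.IsAbelian I}

/-- A Cartan subalgebra: a nilpotent, self-normalizing subalgebra. -/
def IsCartan (A : LeibnizAlg F L) (C : Submodule F L) : Prop :=
  A.IsSubalgebra C ∧ A.IsNilpotentSub C ∧
    ∀ x : L, (∀ c ∈ C, A.bracket x c ∈ C ∧ A.bracket c x ∈ C) → x ∈ C

/-- A maximal nilpotent subalgebra. -/
def IsMaxNilpotentSubalgebra (A : LeibnizAlg F L) (U : Submodule F L) : Prop :=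
  A.IsSubalgebra U ∧ A.IsNilpotentSub U ∧
    ∀ V : Submodule F L, A.IsSubalgebra V → A.IsNilpotentSub V → U ≤ V → V = U

end LeibnizAlg

/-!
Induct on the derived length, working inside a subalgebra `M` in place of `L`. Let `B = M^(n)` and
`Q = C ∩ M^(n-1)`; then `M^(n-1) = B ∔ Q` with `B` and `Q` abelian, so `B = [B, Q] + [Q, B]`. The
right multiplications by elements of `Q` commute. On the joint Fitting null component of their
action on `B` they are nilpotent, so that component spans together with `Q` a nilpotent subalgebra,
which is abelian because `L` is an A-algebra; hence `B = [B, Q]`. Consequently, for every subspace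
`K ≤ B` stable under `Q`, the right multiplications by `Q` have no common kernel on `B / K`.
Now write `d ∈ D` as `b + c` with `b ∈ B`, `c ∈ C`. The induction hypothesis for `[M, M]` splits
`[d, q] ∈ D ∩ [M, M]`, which gives `[b, q] ∈ B ∩ D` for all `q ∈ Q`, and so `b ∈ B ∩ D`.
-/

namespace Submodule

variable {K V ι : Type*} [Field K] [AddCommGroup V] [Module K V]

theorem mem_of_add_mem_sup {X Y Z : Submodule K V} (hXY : X ⊓ Y = ⊥) (hZX : Z ≤ X) {x y : V}
    (hx : x ∈ X) (hy : y ∈ Y) (h : x + y ∈ Z ⊔ Y) : x ∈ Z := by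
  obtain ⟨z, hz, y', hy', he⟩ := mem_sup.1 h
  have hxz : x - z ∈ X ⊓ Y := by
    refine ⟨sub_mem hx (hZX hz), ?_⟩
    rw [show x - z = y' - y by rw [sub_eq_sub_iff_add_eq_add, ← he, add_comm]]
    exact sub_mem hy' hy
  rw [hXY, mem_bot, sub_eq_zero] at hxz
  exact hxz ▸ hz

theorem map_pow_le_of_map_le {f : Module.End K V} {X : Submodule K V} (h : X.map f ≤ X) :
    ∀ n, X.map (f ^ n) ≤ X
  | 0 => by simp [Module.End.one_eq_id]
  | n + 1 => by
    rw [pow_succ', Module.End.mul_eq_comp, map_comp]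
    exact (map_mono (map_pow_le_of_map_le h n)).trans h

theorem eventually_fitting [FiniteDimensional K V] (f : Module.End K V) {X : Submodule K V}
    (hX : X.map f ≤ X) :
    ∀ᶠ n in Filter.atTop, (X ⊓ LinearMap.ker (f ^ n)) ⊔ X.map (f ^ n) = X ∧
      Disjoint (X ⊓ LinearMap.ker (f ^ n)) (X.map (f ^ n)) := by
  have hf : ∀ x ∈ X, f x ∈ X := fun x hx => hX (mem_map_of_mem hx)
  filter_upwards [(f.restrict hf).eventually_isCompl_ker_pow_range_pow] with n hn
  rw [Module.End.pow_restrict n hf, LinearMap.ker_restrict, LinearMap.range_restrict] at hn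
  have hdisj := disjoint_map X.injective_subtype hn.disjoint
  have hsup := congrArg (map X.subtype) hn.sup_eq_top
  rw [Submodule.map_sup, map_subtype_top] at hsup
  rw [map_comap_subtype, map_comap_subtype, inf_eq_right.2 (map_pow_le_of_map_le hX n)] at hdisj hsup
  exact ⟨hsup, hdisj⟩

theorem map_map_le_of_commute {f g : Module.End K V} {X : Submodule K V} (hfg : Commute f g)
    (hX : X.map g ≤ X) : (X.map f).map g ≤ X.map f := by
  rw [← map_comp, ← Module.End.mul_eq_comp, ← hfg.eq, Module.End.mul_eq_comp, map_comp]
  exact map_mono hX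

theorem map_inf_ker_le_of_commute {f g : Module.End K V} {X : Submodule K V} (hfg : Commute f g)
    (hX : X.map g ≤ X) : (X ⊓ LinearMap.ker f).map g ≤ X ⊓ LinearMap.ker f := by
  rintro _ ⟨x, ⟨hxX, hxf⟩, rfl⟩
  refine ⟨hX (mem_map_of_mem hxX), ?_⟩
  rw [SetLike.mem_coe, LinearMap.mem_ker] at hxf ⊢
  rw [← Module.End.mul_apply, hfg.eq, Module.End.mul_apply, hxf, map_zero]

theorem le_of_le_map_sup {g : Module.End K V} {X Y : Submodule K V} {n : ℕ}
    (h : X ≤ X.map g ⊔ Y) (hY : Y.map g ≤ Y) (hn : X.map (g ^ n) = ⊥) : X ≤ Y := by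
  have hiter : ∀ k, X ≤ X.map (g ^ k) ⊔ Y := by
    intro k
    induction k with
    | zero => simp [Module.End.one_eq_id]
    | succ k ih =>
      calc X ≤ (X.map (g ^ k) ⊔ Y).map g ⊔ Y := h.trans (sup_le_sup_right (map_mono ih) _)
        _ ≤ X.map (g ^ (k + 1)) ⊔ Y := by
          rw [Submodule.map_sup, pow_succ', Module.End.mul_eq_comp, map_comp, sup_assoc]
          exact sup_le_sup_left (sup_le hY le_rfl) _
  simpa [hn] using hiter n

theorem le_iSup_map_of_le_map_sup_iSup_map {s : Finset ι} {j : ι} {φ : ι → Module.End K V}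
    (hcomm : ∀ i ∈ s, Commute (φ i) (φ j)) {X : Submodule K V} (hX : X.map (φ j) ≤ X) {n : ℕ}
    (hn : X.map (φ j ^ n) = ⊥) (h : X ≤ X.map (φ j) ⊔ ⨆ i ∈ s, X.map (φ i)) :
    X ≤ ⨆ i ∈ s, X.map (φ i) := by
  refine le_of_le_map_sup h ?_ hn
  simp only [Submodule.map_iSup]
  exact iSup₂_mono fun i hi => map_map_le_of_commute (hcomm i hi) hX

theorem eq_bot_of_le_iSup_map (s : Finset ι) (φ : ι → Module.End K V)
    (hcomm : ∀ i ∈ s, ∀ j ∈ s, Commute (φ i) (φ j)) {X : Submodule K V}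
    (hX : ∀ i ∈ s, X.map (φ i) ≤ X) (hnil : ∀ i ∈ s, ∃ n, X.map (φ i ^ n) = ⊥)
    (h : X ≤ ⨆ i ∈ s, X.map (φ i)) : X = ⊥ := by
  classical
  induction s using Finset.induction_on with
  | empty => simpa using h
  | insert j s _ ih =>
    obtain ⟨n, hn⟩ := hnil j (s.mem_insert_self j)
    have hs : ∀ i ∈ s, i ∈ insert j s := fun i => s.mem_insert_of_mem
    exact ih (fun i hi k hk => hcomm i (hs i hi) k (hs k hk)) (fun i hi => hX i (hs i hi))
      (fun i hi => hnil i (hs i hi)) <| le_iSup_map_of_le_map_sup_iSup_map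
        (fun i hi => hcomm i (hs i hi) j (s.mem_insert_self j)) (hX j (s.mem_insert_self j)) hn
        (by rwa [Finset.iSup_insert] at h)

theorem exists_fitting_decomposition [FiniteDimensional K V] (s : Finset ι)
    (φ : ι → Module.End K V) (hcomm : ∀ i ∈ s, ∀ j ∈ s, Commute (φ i) (φ j))
    {X : Submodule K V} (hX : ∀ i ∈ s, X.map (φ i) ≤ X) :
    ∃ X₀ X₁ : Submodule K V, X₀ ⊔ X₁ = X ∧ (∀ i ∈ s, ∃ n, X₀.map (φ i ^ n) = ⊥) ∧
      X₁ ≤ ⨆ i ∈ s, X.map (φ i) ∧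
      ∀ g : Module.End K V, X.map g ≤ X → (∀ i ∈ s, Commute (φ i) g) →
        X₀.map g ≤ X₀ ∧ X₁.map g ≤ X₁ := by
  classical
  induction s using Finset.induction_on generalizing X with
  | empty => exact ⟨X, ⊥, sup_bot_eq X, by simp, bot_le, fun g hg _ => ⟨hg, by simp⟩⟩
  | insert j s _ ih =>
    have hs : ∀ i ∈ s, i ∈ insert j s := fun i => s.mem_insert_of_mem
    have hj := s.mem_insert_self j
    obtain ⟨N, hN⟩ := Filter.eventually_atTop.1 (eventually_fitting (φ j) (hX j hj))
    set Z₀ := X ⊓ LinearMap.ker (φ j ^ (N + 1))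
    set Z₁ := X.map (φ j ^ (N + 1))
    have hZ₀ : ∀ g, X.map g ≤ X → Commute (φ j) g → Z₀.map g ≤ Z₀ := fun g hgX hg =>
      map_inf_ker_le_of_commute (hg.pow_left _) hgX
    have hZ₁ : ∀ g, X.map g ≤ X → Commute (φ j) g → Z₁.map g ≤ Z₁ := fun g hgX hg =>
      map_map_le_of_commute (hg.pow_left _) hgX
    obtain ⟨W₀, W₁, hW, hnil, hW₁, hinv⟩ := ih (X := Z₀)
      (fun i hi k hk => hcomm i (hs i hi) k (hs k hk))
      (fun i hi => hZ₀ _ (hX i (hs i hi)) (hcomm j hj i (hs i hi)))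
    refine ⟨W₀, W₁ ⊔ Z₁, ?_, ?_, ?_, ?_⟩
    · rw [← sup_assoc, hW, (hN (N + 1) N.le_succ).1]
    · intro i hi
      rcases Finset.mem_insert.1 hi with rfl | hi
      · refine ⟨N + 1, LinearMap.le_ker_iff_map.1 ?_⟩
        exact (hW ▸ le_sup_left : W₀ ≤ Z₀).trans inf_le_right
      · exact hnil i hi
    · rw [Finset.iSup_insert]
      refine sup_le ((hW₁.trans (iSup₂_mono fun i _ => map_mono inf_le_left)).trans
        le_sup_right) (le_sup_of_le_left ?_)
      show X.map (φ j ^ (N + 1)) ≤ X.map (φ j)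
      rw [pow_succ', Module.End.mul_eq_comp, map_comp]
      exact map_mono (map_pow_le_of_map_le (hX j hj) N)
    · intro g hgX hg
      obtain ⟨h₀, h₁⟩ := hinv g (hZ₀ g hgX (hg j hj)) fun i hi => hg i (hs i hi)
      exact ⟨h₀, by rw [Submodule.map_sup]; exact sup_le_sup h₁ (hZ₁ g hgX (hg j hj))⟩

theorem eq_zero_of_le_iSup_map [FiniteDimensional K V] (s : Finset ι)
    (φ : ι → Module.End K V) (hcomm : ∀ i ∈ s, ∀ j ∈ s, Commute (φ i) (φ j))
    {X : Submodule K V} (hX : ∀ i ∈ s, X.map (φ i) ≤ X) (h : X ≤ ⨆ i ∈ s, X.map (φ i)) {x : V}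
    (hx : x ∈ X) (hφx : ∀ i ∈ s, φ i x = 0) : x = 0 := by
  classical
  induction s using Finset.induction_on generalizing X with
  | empty => simpa using h hx
  | insert j s _ ih =>
    have hs : ∀ i ∈ s, i ∈ insert j s := fun i => s.mem_insert_of_mem
    have hj := s.mem_insert_self j
    obtain ⟨N, hN⟩ := Filter.eventually_atTop.1 (eventually_fitting (φ j) (hX j hj))
    obtain ⟨hsup, hdisj⟩ := hN (N + 1) N.le_succ
    set Z₀ := X ⊓ LinearMap.ker (φ j ^ (N + 1))
    set Z₁ := X.map (φ j ^ (N + 1))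
    have hZ₀ : ∀ i ∈ insert j s, Z₀.map (φ i) ≤ Z₀ := fun i hi =>
      map_inf_ker_le_of_commute ((hcomm j hj i hi).pow_left _) (hX i hi)
    have hZ₁ : ∀ i ∈ insert j s, Z₁.map (φ i) ≤ Z₁ := fun i hi =>
      map_map_le_of_commute ((hcomm j hj i hi).pow_left _) (hX i hi)
    -- project `X ≤ ⨆ i, φ i X` onto the Fitting summand `Z₀`
    have hZ₀le : Z₀ ≤ ⨆ i ∈ insert j s, Z₀.map (φ i) := by
      have hXle : X ≤ (⨆ i ∈ insert j s, Z₀.map (φ i)) ⊔ Z₁ := h.trans <| iSup₂_le fun i hi => by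
        rw [← hsup, Submodule.map_sup]
        exact sup_le_sup (le_iSup₂_of_le i hi le_rfl) (hZ₁ i hi)
      have := sup_inf_assoc_of_le Z₁ (iSup₂_le hZ₀ : (⨆ i ∈ insert j s, Z₀.map (φ i)) ≤ Z₀)
      rw [inf_comm Z₁, hdisj.eq_bot, sup_bot_eq] at this
      exact this ▸ le_inf (inf_le_left.trans hXle) le_rfl
    refine ih (fun i hi k hk => hcomm i (hs i hi) k (hs k hk)) (fun i hi => hZ₀ i (hs i hi))
      (le_iSup_map_of_le_map_sup_iSup_map (fun i hi => (hcomm j hj i (hs i hi)).symm) (hZ₀ j hj)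
        (LinearMap.le_ker_iff_map.1 inf_le_right) (by rwa [Finset.iSup_insert] at hZ₀le))
      ⟨hx, ?_⟩ fun i hi => hφx i (hs i hi)
    rw [SetLike.mem_coe, LinearMap.mem_ker, pow_succ, Module.End.mul_apply, hφx j hj, map_zero]

theorem exists_iterate_iSup_map_eq_bot [FiniteDimensional K V] (s : Finset ι)
    (φ : ι → Module.End K V) (hcomm : ∀ i ∈ s, ∀ j ∈ s, Commute (φ i) (φ j))
    {X : Submodule K V} (hX : ∀ i ∈ s, X.map (φ i) ≤ X)
    (hnil : ∀ i ∈ s, ∃ n, X.map (φ i ^ n) = ⊥) :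
    ∃ N, (fun Y : Submodule K V => ⨆ i ∈ s, Y.map (φ i))^[N] X = ⊥ := by
  set T := fun Y : Submodule K V => ⨆ i ∈ s, Y.map (φ i)
  have hT : Monotone T := fun Y Y' h => iSup₂_mono fun i _ => map_mono h
  have hanti : Antitone fun k => T^[k] X :=
    antitone_nat_of_succ_le fun k => by
      rw [Function.iterate_succ_apply]
      exact hT.iterate k (iSup₂_le hX)
  obtain ⟨N, hN⟩ := IsArtinian.monotone_stabilizes ⟨fun k => OrderDual.toDual (T^[k] X), hanti⟩
  have hfix : T^[N] X = T (T^[N] X) := by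
    rw [← Function.iterate_succ_apply' T]
    exact congrArg OrderDual.ofDual (hN (N + 1) N.le_succ)
  have hle : T^[N] X ≤ X := hanti N.zero_le
  refine ⟨N, eq_bot_of_le_iSup_map s φ hcomm (fun i hi => ?_) (fun i hi => ?_) hfix.le⟩
  · exact (le_iSup₂_of_le i hi le_rfl : _ ≤ T (T^[N] X)).trans hfix.ge
  · obtain ⟨n, hn⟩ := hnil i hi
    exact ⟨n, eq_bot_iff.2 (hn ▸ map_mono hle)⟩

theorem mem_of_le_iSup_map [FiniteDimensional K V] (s : Finset ι) (φ : ι → Module.End K V)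
    (hcomm : ∀ i ∈ s, ∀ j ∈ s, Commute (φ i) (φ j)) {X W : Submodule K V}
    (hX : ∀ i ∈ s, X.map (φ i) ≤ X) (hW : ∀ i ∈ s, W.map (φ i) ≤ W)
    (h : X ≤ ⨆ i ∈ s, X.map (φ i)) {x : V} (hx : x ∈ X) (hφx : ∀ i ∈ s, φ i x ∈ W) : x ∈ W := by
  let ψ : s → Module.End K (V ⧸ W) := fun i =>
    W.mapQ W (φ i) (map_le_iff_le_comap.1 (hW i i.2))
  have hψ : ∀ (i : s) (Y : Submodule K V), (Y.map W.mkQ).map (ψ i) = (Y.map (φ i)).map W.mkQ :=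
    fun i Y => by rw [← map_comp, ← map_comp, W.mapQ_mkQ W (φ i)]
  have hcommψ : ∀ i j, Commute (ψ i) (ψ j) := fun i j => by
    refine W.linearMap_qext (LinearMap.ext fun y => ?_)
    change ψ i (ψ j (W.mkQ y)) = ψ j (ψ i (W.mkQ y))
    simp only [ψ, mkQ_apply, mapQ_apply, ← Module.End.mul_apply, (hcomm i i.2 j j.2).eq]
  have hle : X.map W.mkQ ≤ ⨆ i ∈ Finset.univ, (X.map W.mkQ).map (ψ i) := by
    simp only [hψ, Finset.mem_univ, iSup_true, ← Submodule.map_iSup]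
    rw [iSup_subtype' (f := fun i _ => X.map (φ i))] at h
    exact map_mono h
  have := eq_zero_of_le_iSup_map Finset.univ ψ (fun i _ j _ => hcommψ i j)
    (fun i _ => by rw [hψ]; exact map_mono (hX i i.2)) hle (mem_map_of_mem hx)
    (fun i _ => (Quotient.mk_eq_zero W).2 (hφx i i.2))
  exact (Quotient.mk_eq_zero W).1 this

end Submodule

namespace LeibnizAlg

variable {F L : Type*} [Field F] [AddCommGroup L] [Module F L] (A : LeibnizAlg F L)

def IsIdealOf (I M : Submodule F L) : Prop :=
  A.prod I M ≤ I ∧ A.prod M I ≤ I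

def derivedSeriesOf (M : Submodule F L) : ℕ → Submodule F L
  | 0 => M
  | k + 1 => A.prod (derivedSeriesOf M k) (derivedSeriesOf M k)

variable {A}

theorem prod_le_iff {M N P : Submodule F L} :
    A.prod M N ≤ P ↔ ∀ m ∈ M, ∀ n ∈ N, A.bracket m n ∈ P := by
  refine (Submodule.span_le).trans ⟨fun h m hm n hn => h ⟨m, hm, n, hn, rfl⟩, ?_⟩
  rintro h _ ⟨m, hm, n, hn, rfl⟩
  exact h m hm n hn

theorem bracket_mem_prod {M N : Submodule F L} {m n : L} (hm : m ∈ M) (hn : n ∈ N) :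
    A.bracket m n ∈ A.prod M N :=
  Submodule.subset_span ⟨m, hm, n, hn, rfl⟩

theorem prod_mono {M N M' N' : Submodule F L} (hM : M ≤ M') (hN : N ≤ N') :
    A.prod M N ≤ A.prod M' N' :=
  prod_le_iff.2 fun _ hm _ hn => bracket_mem_prod (hM hm) (hN hn)

theorem prod_sup_left (M N P : Submodule F L) :
    A.prod (M ⊔ N) P = A.prod M P ⊔ A.prod N P := by
  refine le_antisymm (prod_le_iff.2 fun m hm p hp => ?_)
    (sup_le (prod_mono le_sup_left le_rfl) (prod_mono le_sup_right le_rfl))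
  obtain ⟨x, hx, y, hy, rfl⟩ := Submodule.mem_sup.1 hm
  rw [map_add, LinearMap.add_apply]
  exact Submodule.add_mem_sup (bracket_mem_prod hx hp) (bracket_mem_prod hy hp)

theorem prod_sup_right (M N P : Submodule F L) :
    A.prod M (N ⊔ P) = A.prod M N ⊔ A.prod M P := by
  refine le_antisymm (prod_le_iff.2 fun m hm p hp => ?_)
    (sup_le (prod_mono le_rfl le_sup_left) (prod_mono le_rfl le_sup_right))
  obtain ⟨x, hx, y, hy, rfl⟩ := Submodule.mem_sup.1 hp
  rw [map_add]
  exact Submodule.add_mem_sup (bracket_mem_prod hm hx) (bracket_mem_prod hm hy)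

theorem IsSubalgebra.inf {M N : Submodule F L} (hM : A.IsSubalgebra M)
    (hN : A.IsSubalgebra N) : A.IsSubalgebra (M ⊓ N) :=
  le_inf ((prod_mono inf_le_left inf_le_left).trans hM)
    ((prod_mono inf_le_right inf_le_right).trans hN)

theorem IsIdealOf.inf_of_le {D M N : Submodule F L} (hD : A.IsIdealOf D M)
    (hN : A.IsSubalgebra N) (hNM : N ≤ M) : A.IsIdealOf (D ⊓ N) N :=
  ⟨le_inf ((prod_mono inf_le_left hNM).trans hD.1) ((prod_mono inf_le_right le_rfl).trans hN),
    le_inf ((prod_mono hNM inf_le_left).trans hD.2) ((prod_mono le_rfl inf_le_right).trans hN)⟩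

theorem IsIdealOf.prod_self {I M : Submodule F L} (hI : A.IsIdealOf I M) :
    A.IsIdealOf (A.prod I I) M := by
  constructor <;> refine prod_le_iff.2 fun x hx y hy => ?_
  · suffices A.prod I I ≤ (A.prod I I).comap (A.bracket.flip y) from this hx
    refine prod_le_iff.2 fun a ha b hb => ?_
    have h : A.bracket (A.bracket a b) y =
        A.bracket a (A.bracket b y) + A.bracket (A.bracket a y) b := by
      rw [A.leibniz]; abel
    rw [Submodule.mem_comap, LinearMap.flip_apply, h]
    exact add_mem (bracket_mem_prod ha (hI.1 (bracket_mem_prod hb hy)))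
      (bracket_mem_prod (hI.1 (bracket_mem_prod ha hy)) hb)
  · suffices A.prod I I ≤ (A.prod I I).comap (A.bracket x) from this hy
    refine prod_le_iff.2 fun a ha b hb => ?_
    rw [Submodule.mem_comap, A.leibniz]
    exact sub_mem (bracket_mem_prod (hI.2 (bracket_mem_prod hx ha)) hb)
      (bracket_mem_prod (hI.2 (bracket_mem_prod hx hb)) ha)

theorem derivedSeriesOf_top : A.derivedSeriesOf ⊤ = A.derSeries := by
  funext k
  induction k with
  | zero => rfl
  | succ k ih => simp only [derivedSeriesOf, derSeries, ih]

theorem derivedSeriesOf_prod_self (M : Submodule F L) (k : ℕ) :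
    A.derivedSeriesOf (A.prod M M) k = A.derivedSeriesOf M (k + 1) := by
  induction k with
  | zero => rfl
  | succ k ih => simp only [derivedSeriesOf, ih]

theorem derivedSeriesOf_antitone {M : Submodule F L} (hM : A.IsSubalgebra M) :
    Antitone (A.derivedSeriesOf M) := by
  refine antitone_nat_of_succ_le fun k => ?_
  induction k with
  | zero => exact hM
  | succ k ih => exact prod_mono ih ih

theorem derivedSeriesOf_isIdealOf {M : Submodule F L} (hM : A.IsSubalgebra M) :
    ∀ k, A.IsIdealOf (A.derivedSeriesOf M k) M
  | 0 => ⟨hM, hM⟩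
  | k + 1 => (derivedSeriesOf_isIdealOf hM k).prod_self

theorem commute_flip_of_prod_eq_bot {Q : Submodule F L} (hQ : A.prod Q Q = ⊥) {q q' : L}
    (hq : q ∈ Q) (hq' : q' ∈ Q) : Commute (A.bracket.flip q) (A.bracket.flip q') := by
  refine LinearMap.ext fun x => ?_
  have h := A.leibniz x q' q
  have hq'q : A.bracket q' q = 0 := (Submodule.mem_bot F).1 (hQ ▸ bracket_mem_prod hq' hq)
  rw [hq'q, map_zero] at h
  exact sub_eq_zero.1 h.symm

theorem commute_flip_bracket_of_prod_eq_bot {Q : Submodule F L} (hQ : A.prod Q Q = ⊥)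
    {q q' : L} (hq : q ∈ Q) (hq' : q' ∈ Q) : Commute (A.bracket.flip q) (A.bracket q') := by
  refine LinearMap.ext fun x => ?_
  have h := A.leibniz q' x q
  have hq'q : A.bracket q' q = 0 := (Submodule.mem_bot F).1 (hQ ▸ bracket_mem_prod hq' hq)
  rw [hq'q, map_zero, LinearMap.zero_apply, sub_zero] at h
  exact h.symm

theorem exists_prod_eq_iSup_map_flip [FiniteDimensional F L] (Q : Submodule F L) :
    ∃ s : Finset Q, ∀ X : Submodule F L, A.prod X Q = ⨆ q ∈ s, X.map (A.bracket.flip (q : L)) := by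
  obtain ⟨s, hs⟩ := Module.Finite.fg_top (R := F) (M := Q)
  refine ⟨s, fun X => le_antisymm (prod_le_iff.2 fun x hx q hq => ?_)
    (iSup₂_le fun q _ => ?_)⟩
  · have h : (⊤ : Submodule F Q).map ((A.bracket x).comp Q.subtype) ≤
        ⨆ q ∈ s, X.map (A.bracket.flip (q : L)) := by
      rw [← hs, Submodule.map_span, Submodule.span_le]
      rintro _ ⟨q', hq', rfl⟩
      have : A.bracket x q' ∈ X.map (A.bracket.flip (q' : L)) := ⟨x, hx, rfl⟩
      exact le_iSup₂ (f := fun (q : Q) (_ : q ∈ s) => X.map (A.bracket.flip (q : L))) q' hq' this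
    exact h ⟨⟨q, hq⟩, Submodule.mem_top, rfl⟩
  · rintro _ ⟨x, hx, rfl⟩
    exact bracket_mem_prod hx q.2

theorem iterate_prod_le {V Q : Submodule F L} (hVQ : A.prod V Q ≤ V) :
    ∀ j, (fun X => A.prod X Q)^[j] V ≤ V
  | 0 => le_rfl
  | j + 1 => by
    rw [Function.iterate_succ_apply']
    exact (prod_mono (iterate_prod_le hVQ j) le_rfl).trans hVQ

theorem isNilpotentSub_sup {V Q : Submodule F L} (hVV : A.prod V V = ⊥) (hQQ : A.prod Q Q ≤ V)
    (hVQ : A.prod V Q ≤ V) (hQV : A.prod Q V ≤ V) {N : ℕ}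
    (hN : (fun X => A.prod X Q)^[N] V = ⊥) :
    A.IsSubalgebra (V ⊔ Q) ∧ A.IsNilpotentSub (V ⊔ Q) := by
  have hsq : A.prod (V ⊔ Q) (V ⊔ Q) ≤ V := by
    rw [prod_sup_left, prod_sup_right, prod_sup_right, hVV]
    exact sup_le (sup_le bot_le hVQ) (sup_le hQV hQQ)
  have hlcs : ∀ j, A.lcs (V ⊔ Q) (j + 1) ≤ (fun X => A.prod X Q)^[j] V := by
    intro j
    induction j with
    | zero => exact hsq
    | succ j ih =>
      rw [Function.iterate_succ_apply']
      refine (prod_mono ih le_rfl).trans ?_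
      rw [prod_sup_right]
      refine sup_le ?_ le_rfl
      exact ((prod_mono (iterate_prod_le hVQ j) le_rfl).trans hVV.le).trans bot_le
  exact ⟨hsq.trans le_sup_left, N + 1, eq_bot_iff.2 ((hlcs N).trans hN.le)⟩

theorem IsAAlgebra.le_prod_right [FiniteDimensional F L] (hA : A.IsAAlgebra)
    {B Q : Submodule F L} (hBB : A.prod B B = ⊥) (hQQ : A.prod Q Q = ⊥) (hBQ : A.prod B Q ≤ B)
    (hQB : A.prod Q B ≤ B) (hB : B ≤ A.prod B Q ⊔ A.prod Q B) : B ≤ A.prod B Q := by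
  obtain ⟨s, hs⟩ := exists_prod_eq_iSup_map_flip (A := A) Q
  let φ : Q → Module.End F L := fun q => A.bracket.flip q
  have hcomm : ∀ q : Q, ∀ q' : Q, Commute (φ q) (φ q') := fun q q' =>
    commute_flip_of_prod_eq_bot hQQ q.2 q'.2
  have hφB : ∀ q : Q, B.map (φ q) ≤ B := by
    rintro q _ ⟨x, hx, rfl⟩
    exact hBQ (bracket_mem_prod hx q.2)
  obtain ⟨V₀, V₁, hV, hnil, hV₁, hinv⟩ :=
    Submodule.exists_fitting_decomposition s φ (fun q _ q' _ => hcomm q q') (fun q _ => hφB q)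
  have hright : ∀ q ∈ Q, V₀.map (A.bracket.flip q) ≤ V₀ := fun q hq =>
    (hinv _ (hφB ⟨q, hq⟩) fun q' _ => hcomm q' ⟨q, hq⟩).1
  have hleft : ∀ q ∈ Q, V₀.map (A.bracket q) ≤ V₀ ∧ V₁.map (A.bracket q) ≤ V₁ := by
    refine fun q hq => hinv _ ?_ fun q' _ => commute_flip_bracket_of_prod_eq_bot hQQ q'.2 hq
    rintro _ ⟨x, hx, rfl⟩
    exact hQB (bracket_mem_prod hq hx)
  have hV₀Q : A.prod V₀ Q ≤ V₀ := prod_le_iff.2 fun x hx q hq => hright q hq ⟨x, hx, rfl⟩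
  have hQV₀ : A.prod Q V₀ ≤ V₀ := prod_le_iff.2 fun q hq x hx => (hleft q hq).1 ⟨x, hx, rfl⟩
  have hQV₁ : A.prod Q V₁ ≤ V₁ := prod_le_iff.2 fun q hq x hx => (hleft q hq).2 ⟨x, hx, rfl⟩
  obtain ⟨N, hN⟩ := Submodule.exists_iterate_iSup_map_eq_bot s φ (fun q _ q' _ => hcomm q q')
    (fun q _ => hright q q.2) hnil
  have hV₀B : V₀ ≤ B := hV ▸ le_sup_left
  obtain ⟨hsub, hnilp⟩ := isNilpotentSub_sup (V := V₀) (Q := Q)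
    (eq_bot_iff.2 ((prod_mono hV₀B hV₀B).trans hBB.le)) (hQQ ▸ bot_le) hV₀Q hQV₀
    (N := N) (by simpa only [hs] using hN)
  have habel := hA _ hsub hnilp
  have hQV₀bot : A.prod Q V₀ = ⊥ :=
    eq_bot_iff.2 ((prod_mono le_sup_right le_sup_left).trans habel.le)
  calc B ≤ A.prod B Q ⊔ A.prod Q (V₀ ⊔ V₁) := hV ▸ hB
    _ ≤ A.prod B Q := by
      rw [prod_sup_right, hQV₀bot, bot_sup_eq, hs B]
      exact sup_le le_rfl (hQV₁.trans hV₁)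

theorem mem_of_forall_bracket_mem [FiniteDimensional F L] {B Q K : Submodule F L}
    (hQQ : A.prod Q Q = ⊥) (hBQ : A.prod B Q ≤ B) (hB : B ≤ A.prod B Q) (hKQ : A.prod K Q ≤ K)
    {b : L} (hb : b ∈ B) (hbK : ∀ q ∈ Q, A.bracket b q ∈ K) : b ∈ K := by
  obtain ⟨s, hs⟩ := exists_prod_eq_iSup_map_flip (A := A) Q
  refine Submodule.mem_of_le_iSup_map s (fun q : Q => A.bracket.flip q)
    (fun q _ q' _ => commute_flip_of_prod_eq_bot hQQ q.2 q'.2) (fun q _ => ?_) (fun q _ => ?_)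
    (hs B ▸ hB) hb fun q _ => hbK q q.2
  · rintro _ ⟨x, hx, rfl⟩
    exact hBQ (bracket_mem_prod hx q.2)
  · rintro _ ⟨x, hx, rfl⟩
    exact hKQ (bracket_mem_prod hx q.2)

theorem IsAAlgebra.le_prod_inf_derivedSeriesOf [FiniteDimensional F L] (hA : A.IsAAlgebra)
    (k : ℕ) {M B C Q : Submodule F L} (hM : A.IsSubalgebra M)
    (hlen : A.derivedSeriesOf M (k + 2) = ⊥) (hB : B = A.derivedSeriesOf M (k + 1))
    (hC : A.IsSubalgebra C) (hdisj : B ⊓ C = ⊥) (hsup : B ⊔ C = M)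
    (hQ : Q = C ⊓ A.derivedSeriesOf M k) :
    A.prod Q Q = ⊥ ∧ A.prod B Q ≤ B ∧ B ≤ A.prod B Q := by
  have hBP : B ≤ A.derivedSeriesOf M k := hB ▸ derivedSeriesOf_antitone hM k.le_succ
  have hPM : A.derivedSeriesOf M k ≤ M := derivedSeriesOf_antitone hM k.zero_le
  have hP : A.derivedSeriesOf M k = B ⊔ Q := by
    rw [hQ, ← sup_inf_assoc_of_le C hBP, hsup, inf_eq_right.2 hPM]
  have hQM : Q ≤ M := hQ ▸ inf_le_right.trans hPM
  have hBB : A.prod B B = ⊥ := hB ▸ hlen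
  have hQQ : A.prod Q Q = ⊥ := eq_bot_iff.2 <| hdisj ▸ hQ ▸
    le_inf (hB ▸ prod_mono inf_le_right inf_le_right) ((prod_mono inf_le_left inf_le_left).trans hC)
  have hBM : A.IsIdealOf B M := hB ▸ derivedSeriesOf_isIdealOf hM (k + 1)
  have hBQ : A.prod B Q ≤ B := (prod_mono le_rfl hQM).trans hBM.1
  have hBQB : B = A.prod B Q ⊔ A.prod Q B :=
    calc B = A.prod (B ⊔ Q) (B ⊔ Q) := hB.trans (congrArg₂ A.prod hP hP)
      _ = A.prod B Q ⊔ A.prod Q B := by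
        rw [prod_sup_left, prod_sup_right, prod_sup_right, hBB, hQQ, bot_sup_eq, sup_bot_eq]
  exact ⟨hQQ, hBQ, hA.le_prod_right hBB hQQ hBQ ((prod_mono hQM le_rfl).trans hBM.2) hBQB.le⟩

theorem IsAAlgebra.le_inf_sup_of_derivedSeriesOf [FiniteDimensional F L] (hA : A.IsAAlgebra)
    (n : ℕ) {M B C D : Submodule F L} (hM : A.IsSubalgebra M)
    (hlen : A.derivedSeriesOf M (n + 1) = ⊥) (hB : B = A.derivedSeriesOf M n)
    (hC : A.IsSubalgebra C) (hdisj : B ⊓ C = ⊥) (hsup : B ⊔ C = M) (hD : A.IsIdealOf D M)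
    (hDM : D ≤ M) : D ≤ (B ⊓ D) ⊔ C := by
  induction n generalizing M B C D with
  | zero => exact le_sup_of_le_left (le_inf (hB ▸ hDM) le_rfl)
  | succ k ih =>
    have hM₁M : A.prod M M ≤ M := hM
    have hM₁ : A.IsSubalgebra (A.prod M M) := prod_mono hM₁M hM₁M
    have hBM₁ : B ≤ A.prod M M := by
      rw [hB, ← derivedSeriesOf_prod_self]
      exact derivedSeriesOf_antitone hM₁ k.zero_le
    have hD₁ : D ⊓ A.prod M M ≤ (B ⊓ D) ⊔ C :=
      (ih hM₁ (by rwa [derivedSeriesOf_prod_self]) (by rwa [derivedSeriesOf_prod_self])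
        (hC.inf hM₁) (eq_bot_iff.2 ((inf_le_inf_left B inf_le_left).trans hdisj.le))
        (by rw [← sup_inf_assoc_of_le C hBM₁, hsup, inf_eq_right.2 hM₁M])
        (hD.inf_of_le hM₁ hM₁M) inf_le_right).trans
      (sup_le_sup (inf_le_inf_left B inf_le_left) inf_le_left)
    obtain ⟨hQQ, hBQ, hBQ'⟩ := hA.le_prod_inf_derivedSeriesOf k hM hlen hB hC hdisj hsup rfl
    have hQM : C ⊓ A.derivedSeriesOf M k ≤ M :=
      inf_le_right.trans (derivedSeriesOf_antitone hM k.zero_le)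
    intro d hd
    obtain ⟨b, hb, c, hc, rfl⟩ := Submodule.mem_sup.1 (hsup ▸ hDM hd : d ∈ B ⊔ C)
    -- the `B`-component of `[d, q] ∈ D ⊓ [M, M]` is `[b, q]`
    have hbD : b ∈ B ⊓ D := mem_of_forall_bracket_mem hQQ hBQ hBQ'
      (le_inf ((prod_mono inf_le_left le_rfl).trans hBQ) ((prod_mono inf_le_right hQM).trans hD.1))
      hb fun q hq => Submodule.mem_of_add_mem_sup hdisj inf_le_left (hBQ (bracket_mem_prod hb hq))
        (hC (bracket_mem_prod hc hq.1)) <| by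
          rw [← LinearMap.add_apply, ← map_add]
          exact hD₁ ⟨hD.1 (bracket_mem_prod hd (hQM hq)), bracket_mem_prod (hDM hd) (hQM hq)⟩
    exact Submodule.add_mem_sup hbD hc

end LeibnizAlg

/-- Let `L` be a solvable Leibniz A-algebra of derived length at most
`n+1` with `L = B ∔ C`, where `B = L^(n)` and `C` is a subalgebra.  Then every ideal
`D` of `L` satisfies `D = (B ∩ D) ∔ (C ∩ D)`. -/
theorem ideal_decomposes_along_splitting
    {F L : Type*} [Field F] [AddCommGroup L] [Module F L] [FiniteDimensional F L]
    (A : LeibnizAlg F L) (hA : A.IsAAlgebra) (n : ℕ)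
    (hlen : A.derSeries (n + 1) = ⊥)
    (B C : Submodule F L) (hB : B = A.derSeries n) (hC : A.IsSubalgebra C)
    (hdisj : B ⊓ C = ⊥) (hsup : B ⊔ C = ⊤)
    (D : Submodule F L) (hD : A.IsIdeal D) :
    (B ⊓ D) ⊓ (C ⊓ D) = ⊥ ∧ (B ⊓ D) ⊔ (C ⊓ D) = D := by
  refine ⟨eq_bot_iff.2 (hdisj ▸ inf_le_inf inf_le_left inf_le_left),
    le_antisymm (sup_le inf_le_right inf_le_right) ?_⟩
  rw [← LeibnizAlg.derivedSeriesOf_top] at hlen hB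
  calc D ≤ ((B ⊓ D) ⊔ C) ⊓ D :=
        le_inf (hA.le_inf_sup_of_derivedSeriesOf n le_top hlen hB hC hdisj hsup hD le_top) le_rfl
    _ = (B ⊓ D) ⊔ (C ⊓ D) := sup_inf_assoc_of_le C inf_le_right
end

section
/- Let L be a cyclic Leibniz algebra of dimension n > 1 over a field F, generated by an element a, with basis a, a², …, aⁿ (where a^{k+1} = [a^k,a]) and [aⁿ,a] = α₂a² + … + αₙaⁿ. Then L is an A-algebra if and only if α₂ ≠ 0, and in that case L = L² ∔ F·(aⁿ − αₙa^{n−1} − … − α₂a). -/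
namespace LeibnizAlg

variable {F : Type*} {L : Type*} [Field F] [AddCommGroup L] [Module F L]

/-- Powers of an element: `apow a k = a^(k+1)`, i.e. `apow a 0 = a` and
`apow a (k+1) = [apow a k, a]`. -/
def apow (A : LeibnizAlg F L) (a : L) : ℕ → L
  | 0 => a
  | k + 1 => A.bracket (apow A a k) a

end LeibnizAlg

open LinearMap (ker range)
open Submodule (span)

section

variable {F L : Type*} [Field F] [AddCommGroup L] [Module F L]

theorem Module.End.apply_eq_zero_of_pow_apply_eq_zero {f : Module.End F L}
    (h : Disjoint (ker f) (range f)) {x : L} :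
    ∀ k : ℕ, (f ^ k) x = 0 → f x = 0
  | 0, hx => by rw [pow_zero, Module.End.one_apply] at hx; rw [hx, map_zero]
  | k + 1, hx => by
    rw [pow_succ, Module.End.mul_apply] at hx
    exact Submodule.disjoint_def.mp h _ (apply_eq_zero_of_pow_apply_eq_zero h k hx) ⟨x, rfl⟩

theorem Submodule.eq_ker_of_span_singleton_sup_eq_top {W : Submodule F L} {c : L →ₗ[F] F} {a : L}
    (hW : W ≤ ker c) (ha : c a ≠ 0) (h : F ∙ a ⊔ W = ⊤) : W = ker c := by
  refine le_antisymm hW fun x hx => ?_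
  obtain ⟨y, hy, w, hw, rfl⟩ := Submodule.mem_sup.mp (h ▸ Submodule.mem_top : x ∈ F ∙ a ⊔ W)
  obtain ⟨t, rfl⟩ := Submodule.mem_span_singleton.mp hy
  have ht : t * c a = 0 := by
    simpa [LinearMap.mem_ker.mp (hW hw)] using LinearMap.mem_ker.mp hx
  rw [(mul_eq_zero.mp ht).resolve_right ha, zero_smul, zero_add]
  exact hw

theorem Module.End.ker_eq_span_singleton_of_sup_range_eq_top [FiniteDimensional F L]
    {f : Module.End F L} {a b : L} (h : F ∙ a ⊔ range f = ⊤) (hb : f b = 0) (hb₀ : b ≠ 0) :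
    ker f = F ∙ b := by
  refine (Submodule.eq_of_le_of_finrank_le ((Submodule.span_singleton_le_iff_mem _ _).mpr hb)
    ?_).symm
  have hrank := LinearMap.finrank_range_add_finrank_ker f
  have hsup := Submodule.finrank_add_le_finrank_add_finrank (F ∙ a) (range f)
  have ha := finrank_span_le_card (R := F) ({a} : Set L)
  rw [h, finrank_top] at hsup
  rw [finrank_span_singleton hb₀]
  simp only [Set.toFinset_singleton, Finset.card_singleton] at ha
  omega

namespace LeibnizAlg

def rightMul (A : LeibnizAlg F L) (a : L) : Module.End F L := A.bracket.flip a

@[simp]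
theorem rightMul_apply (A : LeibnizAlg F L) (a x : L) : A.rightMul a x = A.bracket x a := rfl

theorem isAbelian_iff {A : LeibnizAlg F L} {U : Submodule F L} :
    A.IsAbelian U ↔ ∀ u ∈ U, ∀ v ∈ U, A.bracket u v = 0 := by
  simp only [IsAbelian, prod, Submodule.span_eq_bot, Set.mem_ofPred_eq]
  constructor
  · exact fun h u hu v hv => h _ ⟨u, hu, v, hv, rfl⟩
  · rintro h _ ⟨u, hu, v, hv, rfl⟩
    exact h u hu v hv

section Factorisation

variable {A : LeibnizAlg F L} {a : L} {c : L →ₗ[F] F}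
  (hbr : ∀ x y, A.bracket x y = c y • A.bracket x a)
include hbr

theorem coord_rightMul_eq_zero (y : L) : c (A.rightMul a y) = 0 := by
  have h := A.leibniz y y a
  rw [hbr y (A.bracket y a), hbr (A.bracket y a) y, hbr y y, map_smul, LinearMap.smul_apply,
    sub_self, smul_eq_zero] at h
  rcases h with h | h
  · exact h
  · rw [rightMul_apply, h, map_zero]

theorem range_rightMul_le_ker : range (A.rightMul a) ≤ ker c := by
  rintro _ ⟨y, rfl⟩
  exact coord_rightMul_eq_zero hbr y

theorem derSeries_one_eq_range : A.derSeries 1 = range (A.rightMul a) := by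
  refine le_antisymm (Submodule.span_le.mpr ?_) ?_
  · rintro _ ⟨x, -, y, -, rfl⟩
    exact ⟨c y • x, by rw [map_smul, rightMul_apply, ← hbr]⟩
  · rintro _ ⟨y, rfl⟩
    exact Submodule.subset_span ⟨y, trivial, a, trivial, rfl⟩

theorem lcs_le_map_pow (U : Submodule F L) : ∀ k, A.lcs U k ≤ U.map (A.rightMul a ^ k)
  | 0 => by rw [pow_zero, Module.End.one_eq_id, Submodule.map_id]; rfl
  | k + 1 => by
    refine Submodule.span_le.mpr ?_
    rintro _ ⟨u, hu, v, -, rfl⟩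
    obtain ⟨w, hw, rfl⟩ := lcs_le_map_pow U k hu
    refine ⟨c v • w, U.smul_mem _ hw, ?_⟩
    rw [map_smul, pow_succ', Module.End.mul_apply, hbr, rightMul_apply]

theorem pow_apply_mem_lcs {U : Submodule F L} {u₁ u : L} (hu₁ : u₁ ∈ U) (hc : c u₁ = 1)
    (hu : u ∈ U) : ∀ k, (A.rightMul a ^ k) u ∈ A.lcs U k
  | 0 => hu
  | k + 1 => by
    refine Submodule.subset_span ⟨_, pow_apply_mem_lcs hu₁ hc hu k, u₁, hu₁, ?_⟩
    rw [hbr, hc, one_smul, pow_succ', Module.End.mul_apply, rightMul_apply]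

theorem isSubalgebra_of_rightMul_mem {U : Submodule F L} (hU : ∀ u ∈ U, A.rightMul a u ∈ U) :
    A.IsSubalgebra U := by
  refine Submodule.span_le.mpr ?_
  rintro _ ⟨u, hu, v, -, rfl⟩
  rw [hbr]
  exact U.smul_mem _ (hU u hu)

theorem isNilpotentSub_of_pow_apply_eq_zero {U : Submodule F L} {N : ℕ}
    (hU : ∀ u ∈ U, (A.rightMul a ^ N) u = 0) : A.IsNilpotentSub U := by
  refine ⟨N, eq_bot_iff.mpr ((lcs_le_map_pow hbr U N).trans ?_)⟩
  rintro _ ⟨u, hu, rfl⟩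
  exact (Submodule.mem_bot F).mpr (hU u hu)

theorem isAAlgebra_of_disjoint (h : Disjoint (ker (A.rightMul a)) (range (A.rightMul a))) :
    A.IsAAlgebra := by
  rintro U - ⟨N, hN⟩
  rw [isAbelian_iff]
  intro u hu v hv
  by_cases hU : ∃ u₁ ∈ U, c u₁ ≠ 0
  · obtain ⟨u₁, hu₁, hcu₁⟩ := hU
    have hpow := pow_apply_mem_lcs hbr (U.smul_mem (c u₁)⁻¹ hu₁)
      (by rw [map_smul, smul_eq_mul, inv_mul_cancel₀ hcu₁]) hu N
    rw [hN, Submodule.mem_bot] at hpow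
    rw [hbr, ← rightMul_apply, Module.End.apply_eq_zero_of_pow_apply_eq_zero h N hpow, smul_zero]
  · push Not at hU
    rw [hbr, hU v hv, zero_smul]

theorem disjoint_of_isAAlgebra [FiniteDimensional F L] (hca : c a = 1) (hA : A.IsAAlgebra) :
    Disjoint (ker (A.rightMul a)) (range (A.rightMul a)) := by
  set R := A.rightMul a
  obtain ⟨N, hfit, hN⟩ := ((LinearMap.eventually_isCompl_ker_pow_range_pow R).and
    (Filter.eventually_ge_atTop 2)).exists
  obtain ⟨M, rfl⟩ : ∃ M, N = M + 2 := ⟨N - 2, by omega⟩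
  set K := ker (R ^ (M + 2))
  have hRK : ∀ u ∈ K, R u ∈ K := fun u hu => by
    rw [LinearMap.mem_ker, ← Module.End.mul_apply, ← pow_succ, pow_succ', Module.End.mul_apply,
      LinearMap.mem_ker.mp hu, map_zero]
  have hK : A.IsAbelian K := hA K (isSubalgebra_of_rightMul_mem hbr hRK)
    (isNilpotentSub_of_pow_apply_eq_zero hbr fun u hu => hu)
  obtain ⟨k, hk, i, ⟨w, rfl⟩, hki⟩ := Submodule.mem_sup.mp (hfit.sup_eq_top ▸ Submodule.mem_top :
    a ∈ K ⊔ range (R ^ (M + 2)))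
  have hck : c k = 1 := by
    rw [← hca, ← hki, map_add, pow_succ', Module.End.mul_apply, coord_rightMul_eq_zero hbr,
      add_zero]
  have hRK0 : ∀ u ∈ K, R u = 0 := fun u hu => by
    rw [rightMul_apply, ← one_smul F (A.bracket u a), ← hck, ← hbr]
    exact isAbelian_iff.mp hK u hu k hk
  refine Submodule.disjoint_def.mpr ?_
  rintro _ hx ⟨y, rfl⟩
  refine hRK0 y ?_
  rw [LinearMap.mem_ker, pow_add, Module.End.mul_apply, sq, Module.End.mul_apply,
    LinearMap.mem_ker.mp hx, map_zero]

theorem isAAlgebra_iff_disjoint [FiniteDimensional F L] (hca : c a = 1) :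
    A.IsAAlgebra ↔ Disjoint (ker (A.rightMul a)) (range (A.rightMul a)) :=
  ⟨disjoint_of_isAAlgebra hbr hca, isAAlgebra_of_disjoint hbr⟩

end Factorisation

section Cyclic

variable (A : LeibnizAlg F L) {a : L} {n : ℕ}

/-- `aⁿ − αₙa^{n−1} − … − α₂a` in the paper's notation, where `A.apow a k` is `a^(k+1)`. -/
def kerGen (A : LeibnizAlg F L) (a : L) (n : ℕ) (α : ℕ → F) : L :=
  A.apow a (n - 1) - ∑ k ∈ Finset.Icc 2 n, α k • A.apow a (k - 2)

theorem rightMul_apow (k : ℕ) : A.rightMul a (A.apow a k) = A.apow a (k + 1) := rfl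

theorem span_singleton_sup_range_rightMul
    (hspan : span F (Set.range (fun k : Fin n => A.apow a (k : ℕ))) = ⊤) :
    F ∙ a ⊔ range (A.rightMul a) = ⊤ := by
  refine eq_top_iff.mpr (hspan ▸ Submodule.span_le.mpr ?_)
  rintro _ ⟨⟨_ | j, _⟩, rfl⟩
  · exact Submodule.mem_sup_left (Submodule.mem_span_singleton_self a)
  · exact Submodule.mem_sup_right ⟨A.apow a j, rfl⟩

theorem exists_coord_apow (hindep : LinearIndependent F (fun k : Fin n => A.apow a (k : ℕ)))
    (hspan : span F (Set.range (fun k : Fin n => A.apow a (k : ℕ))) = ⊤) (hn : 0 < n) :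
    ∃ c : L →ₗ[F] F, c a = 1 ∧ ∀ k, 1 ≤ k → k < n → c (A.apow a k) = 0 := by
  refine ⟨(Module.Basis.mk hindep hspan.ge).coord ⟨0, hn⟩,
    Module.Basis.mk_coord_apply_eq (hli := hindep) (hsp := hspan.ge) ⟨0, hn⟩, fun k hk hkn => ?_⟩
  exact Module.Basis.mk_coord_apply_ne (hli := hindep) (hsp := hspan.ge) (j := ⟨k, hkn⟩)
    (Fin.ne_of_val_ne (Nat.pos_iff_ne_zero.mp hk))

variable {A}

theorem bracket_apow_eq_zero
    (hspan : span F (Set.range (fun k : Fin n => A.apow a (k : ℕ))) = ⊤)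
    (hzero : ∀ i j : ℕ, 1 ≤ j → A.bracket (A.apow a i) (A.apow a j) = 0)
    {j : ℕ} (hj : 1 ≤ j) (x : L) : A.bracket x (A.apow a j) = 0 :=
  LinearMap.congr_fun (f := A.bracket.flip (A.apow a j)) (g := 0)
    (LinearMap.ext_on_range hspan fun k => hzero k j hj) x

theorem bracket_eq_coord_smul
    (hspan : span F (Set.range (fun k : Fin n => A.apow a (k : ℕ))) = ⊤)
    (hzero : ∀ i j : ℕ, 1 ≤ j → A.bracket (A.apow a i) (A.apow a j) = 0)
    {c : L →ₗ[F] F} (hca : c a = 1) (hc : ∀ k, 1 ≤ k → k < n → c (A.apow a k) = 0)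
    (x y : L) : A.bracket x y = c y • A.bracket x a := by
  refine LinearMap.congr_fun (g := c.smulRight (A.bracket x a))
    (LinearMap.ext_on_range hspan fun ⟨k, hkn⟩ => ?_) y
  rcases Nat.eq_zero_or_pos k with rfl | hk
  · simp [apow, hca]
  · simp [bracket_apow_eq_zero hspan hzero hk, hc k hk hkn]

theorem rightMul_kerGen {α : ℕ → F} (hn : 0 < n)
    (hrel : A.apow a n = ∑ k ∈ Finset.Icc 2 n, α k • A.apow a (k - 1)) :
    A.rightMul a (A.kerGen a n α) = 0 := by
  rw [kerGen, map_sub, map_sum, rightMul_apow, Nat.sub_add_cancel hn, hrel, sub_eq_zero]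
  refine Finset.sum_congr rfl fun k hk => ?_
  rw [map_smul, rightMul_apow, show k - 2 + 1 = k - 1 by simp at hk; omega]

theorem kerGen_ne_zero (hindep : LinearIndependent F (fun k : Fin n => A.apow a (k : ℕ)))
    (α : ℕ → F) (hn : 0 < n) : A.kerGen a n α ≠ 0 := by
  intro h
  rw [kerGen, sub_eq_zero] at h
  refine hindep.notMem_span_image (s := {k | (k : ℕ) < n - 1}) (x := ⟨n - 1, by omega⟩)
    (by simp) (h ▸ Submodule.sum_mem _ fun k hk => Submodule.smul_mem _ _ ?_)
  simp only [Finset.mem_Icc] at hk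
  exact Submodule.subset_span ⟨⟨k - 2, by omega⟩, by simp only [Set.mem_ofPred_eq]; omega, rfl⟩

theorem coord_kerGen {α : ℕ → F} (hn : 1 < n) {c : L →ₗ[F] F} (hca : c a = 1)
    (hc : ∀ k, 1 ≤ k → k < n → c (A.apow a k) = 0) : c (A.kerGen a n α) = -α 2 := by
  rw [kerGen, map_sub, map_sum, hc (n - 1) (by omega) (by omega), zero_sub,
    Finset.sum_eq_single 2]
  · rw [map_smul, Nat.sub_self, apow, hca, smul_eq_mul, mul_one]
  · intro k hk hk2
    simp only [Finset.mem_Icc] at hk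
    rw [map_smul, hc (k - 2) (by omega) (by omega), smul_zero]
  · intro h
    exact absurd (Finset.mem_Icc.mpr ⟨le_rfl, hn⟩) h

end Cyclic

end LeibnizAlg

end

/-- Let `L` be a cyclic Leibniz algebra of dimension `n > 1` generated by
`a`, with basis `a, a², …, aⁿ` (where `a^(k+1) = [a^k, a]`), product determined by
`[aⁿ,a] = α₂a² + … + αₙaⁿ` and `[aⁱ,aʲ] = 0` for `j ≥ 2`.  Then `L` is an A-algebra iff
`α₂ ≠ 0`, and in that case `L = L² ∔ F·(aⁿ − αₙa^{n−1} − … − α₂a)`. -/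
theorem cyclic_leibniz_A_algebra_iff
    {F L : Type*} [Field F] [AddCommGroup L] [Module F L] [FiniteDimensional F L]
    (A : LeibnizAlg F L) (n : ℕ) (hn : 1 < n) (a : L)
    (hindep : LinearIndependent F (fun k : Fin n => A.apow a (k : ℕ)))
    (hspan : Submodule.span F (Set.range (fun k : Fin n => A.apow a (k : ℕ))) = ⊤)
    (α : ℕ → F)
    (hrel : A.apow a n = ∑ k ∈ Finset.Icc 2 n, α k • A.apow a (k - 1))
    (hzero : ∀ i j : ℕ, 1 ≤ j → A.bracket (A.apow a i) (A.apow a j) = 0)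
    (b : L) (hb : b = A.apow a (n - 1) - ∑ k ∈ Finset.Icc 2 n, α k • A.apow a (k - 2)) :
    (A.IsAAlgebra ↔ α 2 ≠ 0) ∧
    (α 2 ≠ 0 →
      A.derSeries 1 ⊓ Submodule.span F {b} = ⊥ ∧
      A.derSeries 1 ⊔ Submodule.span F {b} = ⊤) := by
  obtain rfl : b = A.kerGen a n α := hb
  obtain ⟨c, hca, hc⟩ := A.exists_coord_apow hindep hspan (by omega)
  have hbr := LeibnizAlg.bracket_eq_coord_smul hspan hzero hca hc
  have hsup := A.span_singleton_sup_range_rightMul hspan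
  have hb₀ := LeibnizAlg.kerGen_ne_zero hindep α (by omega)
  have hcb : c (A.kerGen a n α) ≠ 0 ↔ α 2 ≠ 0 := by
    rw [LeibnizAlg.coord_kerGen hn hca hc, neg_ne_zero]
  have hrange : range (A.rightMul a) = ker c :=
    Submodule.eq_ker_of_span_singleton_sup_eq_top
      (LeibnizAlg.range_rightMul_le_ker hbr) (by simp [hca]) hsup
  have hker : ker (A.rightMul a) = F ∙ A.kerGen a n α :=
    Module.End.ker_eq_span_singleton_of_sup_range_eq_top hsup
      (LeibnizAlg.rightMul_kerGen (by omega) hrel) hb₀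
  have hdisj : Disjoint (ker c) (F ∙ A.kerGen a n α) ↔ α 2 ≠ 0 := by
    rw [Submodule.disjoint_span_singleton' hb₀, LinearMap.mem_ker, ← hcb]
  refine ⟨?_, fun hα => ?_⟩
  · rw [LeibnizAlg.isAAlgebra_iff_disjoint hbr hca, hker, hrange, disjoint_comm, hdisj]
  · rw [LeibnizAlg.derSeries_one_eq_range hbr, hrange, sup_comm]
    exact ⟨disjoint_iff.mp (hdisj.mpr hα),
      LinearMap.span_singleton_sup_ker_eq_top c (hcb.mpr hα)⟩
end
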